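/- arXiv:1408.3306 — 5 statements merged into one kernel-verified Lean document; each statement's English description precedes it below -/
import Mathlib

section
/- For (s,p) ∈ ℂ², the point (s,p) lies in the symmetrized bidisc G₂ = {(λ₁+λ₂, λ₁λ₂) : λ₁, λ₂ ∈ 𝔻} if and only if |s - conj(s)·p| + |p|² < 1. -/
open Complex Metric

/-- The symmetrized bidisc as the image of the bidisc under symmetrization. -/
def symBidisc : Set (ℂ × ℂ) :=
  {q | ∃ l1 l2 : ℂ, l1 ∈ ball (0:ℂ) 1 ∧ l2 ∈ ball (0:ℂ) 1 ∧ q = (l1 + l2, l1 * l2)}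

/-!
Write `s = λ₁ + λ₂`, `p = λ₁λ₂`, `a = |λ₁|`, `b = |λ₂|`. Then
`s - s̄p = λ₁(1 - b²) + λ₂(1 - a²)`, so when `a, b ≤ 1` the triangle inequality gives
`|s - s̄p| + |p|² ≤ a(1 - b²) + b(1 - a²) + a²b² = 1 - (1 - a)(1 - b)(1 - ab)`,
and when `b < 1 ≤ a` the reverse triangle inequality gives the opposite bound.
Hence `|s - s̄p| + |p|² < 1` exactly when both roots of `z² - sz + p` lie in the disc.
-/

open ComplexConjugate

namespace Complex

theorem add_sub_conj_add_mul_mul (l1 l2 : ℂ) :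
    (l1 + l2) - conj (l1 + l2) * (l1 * l2) =
      l1 * ((1 - ‖l2‖ ^ 2 : ℝ) : ℂ) + l2 * ((1 - ‖l1‖ ^ 2 : ℝ) : ℂ) := by
  push_cast
  rw [← mul_conj', ← mul_conj', map_add]
  ring

theorem norm_mul_ofReal (z : ℂ) (r : ℝ) : ‖z * (r : ℂ)‖ = ‖z‖ * |r| := by
  rw [norm_mul, norm_real, Real.norm_eq_abs]

theorem norm_add_sub_conj_add_mul_mul_le {l1 l2 : ℂ} (h1 : ‖l1‖ ≤ 1) (h2 : ‖l2‖ ≤ 1) :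
    ‖(l1 + l2) - conj (l1 + l2) * (l1 * l2)‖ ≤
      ‖l1‖ * (1 - ‖l2‖ ^ 2) + ‖l2‖ * (1 - ‖l1‖ ^ 2) := by
  have hb : 0 ≤ 1 - ‖l2‖ ^ 2 := by nlinarith [norm_nonneg l2]
  have ha : 0 ≤ 1 - ‖l1‖ ^ 2 := by nlinarith [norm_nonneg l1]
  calc _ ≤ ‖l1 * ((1 - ‖l2‖ ^ 2 : ℝ) : ℂ)‖ + ‖l2 * ((1 - ‖l1‖ ^ 2 : ℝ) : ℂ)‖ := by
        rw [add_sub_conj_add_mul_mul]; exact norm_add_le _ _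
    _ = _ := by rw [norm_mul_ofReal, norm_mul_ofReal, abs_of_nonneg ha, abs_of_nonneg hb]

theorem le_norm_add_sub_conj_add_mul_mul {l1 l2 : ℂ} (h1 : 1 ≤ ‖l1‖) (h2 : ‖l2‖ ≤ 1) :
    ‖l1‖ * (1 - ‖l2‖ ^ 2) + ‖l2‖ * (1 - ‖l1‖ ^ 2) ≤
      ‖(l1 + l2) - conj (l1 + l2) * (l1 * l2)‖ := by
  have hb : 0 ≤ 1 - ‖l2‖ ^ 2 := by nlinarith [norm_nonneg l2]
  have ha : 1 - ‖l1‖ ^ 2 ≤ 0 := by nlinarith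
  calc _ = ‖l1 * ((1 - ‖l2‖ ^ 2 : ℝ) : ℂ)‖ - ‖-(l2 * ((1 - ‖l1‖ ^ 2 : ℝ) : ℂ))‖ := by
        rw [norm_neg, norm_mul_ofReal, norm_mul_ofReal, abs_of_nonneg hb, abs_of_nonpos ha]
        ring
    _ ≤ _ := by
        rw [add_sub_conj_add_mul_mul, ← sub_neg_eq_add]; exact norm_sub_norm_le _ _

theorem norm_lt_one_of_norm_add_sub_conj_add_mul_mul_add_sq_lt_one {l1 l2 : ℂ}
    (h : ‖(l1 + l2) - conj (l1 + l2) * (l1 * l2)‖ + ‖l1 * l2‖ ^ 2 < 1) : ‖l1‖ < 1 := by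
  by_contra! ha
  have hab : ‖l1‖ * ‖l2‖ < 1 := by
    rw [norm_mul] at h
    nlinarith [norm_nonneg ((l1 + l2) - conj (l1 + l2) * (l1 * l2)),
      mul_nonneg (norm_nonneg l1) (norm_nonneg l2)]
  have hb : ‖l2‖ < 1 := by nlinarith [norm_nonneg l2]
  have hlow := le_norm_add_sub_conj_add_mul_mul ha hb.le
  rw [norm_mul] at h
  nlinarith [mul_nonneg (mul_nonneg (sub_nonneg.2 ha) (sub_nonneg.2 hb.le)) (sub_nonneg.2 hab.le)]

theorem norm_add_sub_conj_add_mul_mul_add_sq_lt_one_iff (l1 l2 : ℂ) :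
    ‖(l1 + l2) - conj (l1 + l2) * (l1 * l2)‖ + ‖l1 * l2‖ ^ 2 < 1 ↔ ‖l1‖ < 1 ∧ ‖l2‖ < 1 := by
  refine ⟨fun h => ⟨norm_lt_one_of_norm_add_sub_conj_add_mul_mul_add_sq_lt_one h,
    norm_lt_one_of_norm_add_sub_conj_add_mul_mul_add_sq_lt_one (l2 := l1) ?_⟩, fun ⟨ha, hb⟩ => ?_⟩
  · rwa [add_comm l2, mul_comm l2]
  · have hup := norm_add_sub_conj_add_mul_mul_le ha.le hb.le
    have hab : ‖l1‖ * ‖l2‖ < 1 := by nlinarith [norm_nonneg l1, norm_nonneg l2]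
    rw [norm_mul]
    nlinarith [mul_pos (mul_pos (sub_pos.2 ha) (sub_pos.2 hb)) (sub_pos.2 hab)]

theorem exists_add_eq_mul_eq (s p : ℂ) : ∃ l1 l2 : ℂ, l1 + l2 = s ∧ l1 * l2 = p := by
  obtain ⟨d, hd⟩ := IsAlgClosed.exists_eq_mul_self (s ^ 2 - 4 * p)
  refine ⟨(s + d) / 2, (s - d) / 2, by ring, ?_⟩
  linear_combination hd / 4

end Complex

theorem stmt0 (s p : ℂ) :
    (s, p) ∈ symBidisc ↔
      ‖s - (starRingEnd ℂ) s * p‖ + ‖p‖ ^ 2 < 1 := by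
  constructor
  · rintro ⟨l1, l2, h1, h2, heq⟩
    obtain ⟨rfl, rfl⟩ := Prod.mk.inj heq
    exact (norm_add_sub_conj_add_mul_mul_add_sq_lt_one_iff l1 l2).2
      ⟨mem_ball_zero_iff.1 h1, mem_ball_zero_iff.1 h2⟩
  · intro h
    obtain ⟨l1, l2, rfl, rfl⟩ := exists_add_eq_mul_eq s p
    obtain ⟨h1, h2⟩ := (norm_add_sub_conj_add_mul_mul_add_sq_lt_one_iff l1 l2).1 h
    exact ⟨l1, l2, mem_ball_zero_iff.2 h1, mem_ball_zero_iff.2 h2, rfl⟩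
end

section
/- If λ₁, λ₂ ∈ 𝔻, then (λ₁+λ₂, λ₁λ₂) satisfies |s - conj(s)p| + |p|² < 1 where s = λ₁+λ₂ and p = λ₁λ₂. -/
/-! With `a = ‖λ₁‖`, `b = ‖λ₂‖`, one has `s - conj(s) p = λ₁ (1 - b²) + λ₂ (1 - a²)`, so
`‖s - conj(s) p‖ + ‖p‖² ≤ a (1 - b²) + b (1 - a²) + a²b² = 1 - (1 - a)(1 - b)(1 - ab) < 1`. -/

open Complex Metric
open scoped ComplexConjugate

section RCLike

variable {𝕜 : Type*} [RCLike 𝕜]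

theorem RCLike.norm_one_sub_conj_mul_self {z : 𝕜} (hz : ‖z‖ ≤ 1) :
    ‖1 - conj z * z‖ = 1 - ‖z‖ ^ 2 := by
  have hnonneg : 0 ≤ 1 - ‖z‖ ^ 2 := by nlinarith [norm_nonneg z]
  rw [RCLike.conj_mul, ← RCLike.ofReal_pow, ← RCLike.ofReal_one, ← RCLike.ofReal_sub,
    RCLike.norm_ofReal, abs_of_nonneg hnonneg]

theorem RCLike.add_sub_conj_add_mul_mul_eq (l1 l2 : 𝕜) :
    (l1 + l2) - conj (l1 + l2) * (l1 * l2) =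
      l1 * (1 - conj l2 * l2) + l2 * (1 - conj l1 * l1) := by
  rw [map_add]
  ring

theorem RCLike.norm_add_sub_conj_add_mul_mul_le {l1 l2 : 𝕜} (h1 : ‖l1‖ ≤ 1) (h2 : ‖l2‖ ≤ 1) :
    ‖(l1 + l2) - conj (l1 + l2) * (l1 * l2)‖ ≤
      ‖l1‖ * (1 - ‖l2‖ ^ 2) + ‖l2‖ * (1 - ‖l1‖ ^ 2) := by
  rw [RCLike.add_sub_conj_add_mul_mul_eq]
  calc _ ≤ ‖l1 * (1 - conj l2 * l2)‖ + ‖l2 * (1 - conj l1 * l1)‖ := norm_add_le _ _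
    _ = _ := by
      rw [norm_mul, norm_mul, RCLike.norm_one_sub_conj_mul_self h1,
        RCLike.norm_one_sub_conj_mul_self h2]

end RCLike

theorem add_mul_one_sub_sq_add_sq_lt_one {a b : ℝ} (ha0 : 0 ≤ a) (ha : a < 1) (hb : b < 1) :
    a * (1 - b ^ 2) + b * (1 - a ^ 2) + (a * b) ^ 2 < 1 := by
  have hab : a * b < 1 := by nlinarith
  have hfactor : 1 - (a * (1 - b ^ 2) + b * (1 - a ^ 2) + (a * b) ^ 2) =
      (1 - a) * (1 - b) * (1 - a * b) := by ring
  have hpos : 0 < (1 - a) * (1 - b) * (1 - a * b) :=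
    mul_pos (mul_pos (sub_pos.mpr ha) (sub_pos.mpr hb)) (sub_pos.mpr hab)
  linarith

theorem stmt1 (l1 l2 : ℂ) (h1 : l1 ∈ ball (0:ℂ) 1) (h2 : l2 ∈ ball (0:ℂ) 1) :
    ‖(l1 + l2) - (starRingEnd ℂ) (l1 + l2) * (l1 * l2)‖ +
      (‖l1 * l2‖) ^ 2 < 1 := by
  rw [mem_ball_zero_iff] at h1 h2
  calc _ ≤ ‖l1‖ * (1 - ‖l2‖ ^ 2) + ‖l2‖ * (1 - ‖l1‖ ^ 2) + (‖l1‖ * ‖l2‖) ^ 2 := by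
        rw [norm_mul]
        gcongr
        exact RCLike.norm_add_sub_conj_add_mul_mul_le h1.le h2.le
    _ < 1 := add_mul_one_sub_sq_add_sq_lt_one (norm_nonneg _) h1 h2
end

section
/- For every μ ∈ 𝕋 (the unit circle), the map (a,s,p) ↦ (μ a, μ s, μ² p) maps the pentablock 𝒫 onto itself; i.e., 𝒫 is a (1,1,2)-quasi-circular (indeed quasi-balanced: the same holds for all μ ∈ closure(𝔻)) domain containing the origin. -/
open Complex Metric

/-- The pentablock. -/
def pentablock : Set (ℂ × ℂ × ℂ) :=
  {x | ∃ a l1 l2 : ℂ, l1 ∈ ball (0:ℂ) 1 ∧ l2 ∈ ball (0:ℂ) 1 ∧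
    x = (a, l1 + l2, l1 * l2) ∧
    ‖a‖ < (1/2) * ‖1 - l1 * (starRingEnd ℂ) l2‖ +
      (1/2) * Real.sqrt (1 - ‖l1‖ ^ 2) * Real.sqrt (1 - ‖l2‖ ^ 2)}

/-!
If `(a, λ₁ + λ₂, λ₁λ₂) ∈ 𝒫` and `‖μ‖ ≤ 1`, then `(μa, μs, μ²p)` is represented by `μa, μλ₁, μλ₂`.
Since `μλ₁ · conj (μλ₂) = ‖μ‖² λ₁ conj λ₂`, and both `‖μ‖ |1 - w| ≤ |1 - ‖μ‖² w|` for `|w| ≤ 1`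
and `1 - |μλ|² ≥ 1 - |λ|²`, the bound defining `𝒫` at the new point dominates `‖μ‖` times the
old bound. For `‖μ‖ = 1` the inverse map is the action of `μ⁻¹`, so the map is onto.
-/

/-- The `(1, 1, 2)`-quasi-circular action of `μ` on `ℂ³`. -/
def quasiCircularSMul (μ : ℂ) (x : ℂ × ℂ × ℂ) : ℂ × ℂ × ℂ :=
  (μ * x.1, μ * x.2.1, μ ^ 2 * x.2.2)

lemma quasiCircularSMul_smul (μ ν : ℂ) (x : ℂ × ℂ × ℂ) :
    quasiCircularSMul μ (quasiCircularSMul ν x) = quasiCircularSMul (μ * ν) x := by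
  simp only [quasiCircularSMul, Prod.mk.injEq]
  refine ⟨?_, ?_, ?_⟩ <;> ring

lemma quasiCircularSMul_one (x : ℂ × ℂ × ℂ) : quasiCircularSMul 1 x = x := by
  simp [quasiCircularSMul]

lemma zero_mem_pentablock : ((0, 0, 0) : ℂ × ℂ × ℂ) ∈ pentablock :=
  ⟨0, 0, 0, by simp, by simp, by simp, by simp⟩

/-- Squaring, the difference of the two sides is `(1 - t²)(1 - t²‖w‖²) ≥ 0`. -/
lemma mul_norm_one_sub_le_norm_one_sub_sq_mul {t : ℝ} {w : ℂ} (ht₀ : 0 ≤ t) (ht₁ : t ≤ 1)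
    (hw : ‖w‖ ≤ 1) : t * ‖1 - w‖ ≤ ‖1 - (t : ℂ) ^ 2 * w‖ := by
  refine le_of_pow_le_pow_left₀ two_ne_zero (norm_nonneg _) ?_
  have hw' : w.re ^ 2 + w.im ^ 2 ≤ 1 := by
    rw [← sq_le_one_iff₀ (norm_nonneg w), Complex.sq_norm, normSq_apply] at hw
    nlinarith
  have ht : t ^ 2 ≤ 1 := pow_le_one₀ ht₀ ht₁
  rw [mul_pow, Complex.sq_norm, Complex.sq_norm, normSq_apply, normSq_apply]
  simp only [sub_re, sub_im, one_re, one_im, mul_re, mul_im, ← ofReal_pow, ofReal_re, ofReal_im]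
  nlinarith [mul_nonneg (sub_nonneg.2 ht) (sub_nonneg.2 (mul_le_one₀ ht (by positivity) hw'))]

lemma norm_mul_le_of_norm_le_one {α : Type*} [SeminormedRing α] {a : α} (ha : ‖a‖ ≤ 1)
    (b : α) : ‖a * b‖ ≤ ‖b‖ :=
  (norm_mul_le a b).trans (mul_le_of_le_one_left (norm_nonneg b) ha)

lemma quasiCircularSMul_mem_pentablock {μ : ℂ} (hμ : ‖μ‖ ≤ 1) {x : ℂ × ℂ × ℂ}
    (hx : x ∈ pentablock) : quasiCircularSMul μ x ∈ pentablock := by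
  rcases eq_or_ne μ 0 with rfl | hμ₀
  · simpa [quasiCircularSMul] using zero_mem_pentablock
  obtain ⟨a, l1, l2, h1, h2, rfl, ha⟩ := hx
  rw [mem_ball_zero_iff] at h1 h2
  have hball {l : ℂ} (hl : ‖l‖ < 1) : μ * l ∈ ball (0 : ℂ) 1 := by
    rw [mem_ball_zero_iff]
    exact (norm_mul_le_of_norm_le_one hμ l).trans_lt hl
  refine ⟨μ * a, μ * l1, μ * l2, hball h1, hball h2,
    by simp only [quasiCircularSMul, Prod.mk.injEq]; exact ⟨trivial, by ring, by ring⟩, ?_⟩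
  have hprod : μ * l1 * (starRingEnd ℂ) (μ * l2)
      = (‖μ‖ : ℂ) ^ 2 * (l1 * (starRingEnd ℂ) l2) := by
    rw [map_mul, ← mul_conj']; ring
  have hw : ‖l1 * (starRingEnd ℂ) l2‖ ≤ 1 := by
    rw [norm_mul, norm_conj]; exact mul_le_one₀ h1.le (norm_nonneg _) h2.le
  have hfirst := mul_norm_one_sub_le_norm_one_sub_sq_mul (norm_nonneg μ) hμ hw
  have hsecond : ‖μ‖ * (Real.sqrt (1 - ‖l1‖ ^ 2) * Real.sqrt (1 - ‖l2‖ ^ 2)) ≤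
      Real.sqrt (1 - ‖μ * l1‖ ^ 2) * Real.sqrt (1 - ‖μ * l2‖ ^ 2) :=
    calc _ ≤ Real.sqrt (1 - ‖l1‖ ^ 2) * Real.sqrt (1 - ‖l2‖ ^ 2) :=
          mul_le_of_le_one_left (by positivity) hμ
      _ ≤ _ := by gcongr <;> exact norm_mul_le_of_norm_le_one hμ _
  rw [hprod, norm_mul]
  have := mul_lt_mul_of_pos_left ha (norm_pos_iff.2 hμ₀)
  linarith

theorem stmt15 :
    ((0, 0, 0) : ℂ × ℂ × ℂ) ∈ pentablock ∧
    (∀ μ : ℂ, ‖μ‖ ≤ 1 → ∀ x ∈ pentablock,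
      ((μ * x.1, μ * x.2.1, μ ^ 2 * x.2.2) : ℂ × ℂ × ℂ) ∈ pentablock) ∧
    (∀ μ : ℂ, ‖μ‖ = 1 →
      (fun x : ℂ × ℂ × ℂ => (μ * x.1, μ * x.2.1, μ ^ 2 * x.2.2)) '' pentablock
        = pentablock) := by
  refine ⟨zero_mem_pentablock, fun μ hμ x hx => quasiCircularSMul_mem_pentablock hμ hx,
    fun μ hμ => ?_⟩
  have hμ₀ : μ ≠ 0 := norm_ne_zero_iff.1 (by rw [hμ]; exact one_ne_zero)
  change quasiCircularSMul μ '' pentablock = pentablock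
  refine Set.Subset.antisymm ?_ fun x hx => ?_
  · rintro _ ⟨x, hx, rfl⟩
    exact quasiCircularSMul_mem_pentablock hμ.le hx
  refine ⟨quasiCircularSMul μ⁻¹ x, ?_, ?_⟩
  · exact quasiCircularSMul_mem_pentablock (by rw [norm_inv, hμ, inv_one]) hx
  · rw [quasiCircularSMul_smul, mul_inv_cancel₀ hμ₀, quasiCircularSMul_one]
end

section
/- For each r with 0 < r < 1, the set 𝒫_r := {(ra, rs, r²p) : (a,s,p) ∈ 𝒫} has compact closure contained in 𝒫. -/
/-!
Write `h(λ₁, λ₂)` for the bound on `|a|` in the definition of `𝒫`. The non-strict version of the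
defining inequality, over the closed bidisc, cuts out a compact set whose image `K` under
`(a, λ₁, λ₂) ↦ (a, λ₁ + λ₂, λ₁λ₂)` contains `𝒫`. The dilation by `r` acts on parameters as
`(a, λ₁, λ₂) ↦ (ra, rλ₁, rλ₂)`, and `r h(λ₁, λ₂) < h(rλ₁, rλ₂)` on the closed bidisc, so the
dilate of `K` is a compact subset of `𝒫` containing `𝒫_r`.
-/

open Complex Metric

open Set

noncomputable def pentablockBound (l1 l2 : ℂ) : ℝ :=
  (1/2) * ‖1 - l1 * (starRingEnd ℂ) l2‖ +
    (1/2) * Real.sqrt (1 - ‖l1‖ ^ 2) * Real.sqrt (1 - ‖l2‖ ^ 2)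

lemma mem_pentablock {x : ℂ × ℂ × ℂ} :
    x ∈ pentablock ↔ ∃ a l1 l2 : ℂ, l1 ∈ ball (0 : ℂ) 1 ∧ l2 ∈ ball (0 : ℂ) 1 ∧
      x = (a, l1 + l2, l1 * l2) ∧ ‖a‖ < pentablockBound l1 l2 :=
  Iff.rfl

def symmetrizationMap (y : ℂ × ℂ × ℂ) : ℂ × ℂ × ℂ :=
  (y.1, y.2.1 + y.2.2, y.2.1 * y.2.2)

/-- The coordinates are `(a, λ₁, λ₂)`. -/
def closedPentablockParams : Set (ℂ × ℂ × ℂ) :=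
  {y | ‖y.2.1‖ ≤ 1 ∧ ‖y.2.2‖ ≤ 1 ∧ ‖y.1‖ ≤ pentablockBound y.2.1 y.2.2}

def weightedDilation (r : ℂ) (x : ℂ × ℂ × ℂ) : ℂ × ℂ × ℂ :=
  (r * x.1, r * x.2.1, r ^ 2 * x.2.2)

lemma continuous_symmetrizationMap : Continuous symmetrizationMap := by
  unfold symmetrizationMap
  fun_prop

lemma continuous_weightedDilation (r : ℂ) : Continuous (weightedDilation r) := by
  unfold weightedDilation
  fun_prop

lemma closure_image_subset_image_of_isCompact {X Y : Type*} [TopologicalSpace X]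
    [TopologicalSpace Y] [T2Space Y] {f : X → Y} (hf : Continuous f) {S K : Set X}
    (hK : IsCompact K) (hSK : S ⊆ K) : closure (f '' S) ⊆ f '' K :=
  closure_minimal (image_mono hSK) (hK.image hf).isClosed

lemma norm_one_sub_sq_mul_sq_sub (r : ℝ) (z : ℂ) :
    ‖1 - (r : ℂ) ^ 2 * z‖ ^ 2 - (r * ‖1 - z‖) ^ 2 = (1 - r ^ 2) * (1 - r ^ 2 * ‖z‖ ^ 2) := by
  simp only [mul_pow, Complex.sq_norm, normSq_apply, sub_re, sub_im, one_re, one_im, mul_re,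
    mul_im, ← ofReal_pow, ofReal_re, ofReal_im]
  ring

lemma mul_norm_one_sub_lt_norm_one_sub_sq_mul {r : ℝ} (hr : |r| < 1) {z : ℂ} (hz : ‖z‖ ≤ 1) :
    r * ‖1 - z‖ < ‖1 - (r : ℂ) ^ 2 * z‖ := by
  have hr2 : r ^ 2 < 1 := (sq_lt_one_iff_abs_lt_one r).mpr hr
  have hrz : r ^ 2 * ‖z‖ ^ 2 < 1 := by
    nlinarith [pow_le_one₀ (norm_nonneg z) hz (n := 2), sq_nonneg r]
  refine lt_of_pow_lt_pow_left₀ 2 (norm_nonneg _) (sub_pos.mp ?_)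
  rw [norm_one_sub_sq_mul_sq_sub]
  exact mul_pos (by linarith) (by linarith)

lemma mul_sqrt_one_sub_sq_le {r : ℝ} (hr0 : 0 ≤ r) (hr1 : r ≤ 1) (x : ℝ) :
    r * Real.sqrt (1 - x ^ 2) ≤ Real.sqrt (1 - (r * x) ^ 2) := by
  calc r * Real.sqrt (1 - x ^ 2) = Real.sqrt (r ^ 2 * (1 - x ^ 2)) := by
        rw [Real.sqrt_mul (sq_nonneg r), Real.sqrt_sq hr0]
    _ ≤ Real.sqrt (1 - (r * x) ^ 2) := Real.sqrt_le_sqrt (by nlinarith)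

lemma sqrt_one_sub_sq_le_sqrt_one_sub_mul_sq {r : ℝ} (hr : |r| ≤ 1) (x : ℝ) :
    Real.sqrt (1 - x ^ 2) ≤ Real.sqrt (1 - (r * x) ^ 2) := by
  have hr2 : r ^ 2 ≤ 1 := (sq_le_one_iff_abs_le_one r).mpr hr
  exact Real.sqrt_le_sqrt (by nlinarith [sq_nonneg x])

lemma continuous_pentablockBound :
    Continuous fun l : ℂ × ℂ => pentablockBound l.1 l.2 := by
  unfold pentablockBound
  fun_prop

lemma norm_mul_conj_le_one {l1 l2 : ℂ} (h1 : ‖l1‖ ≤ 1) (h2 : ‖l2‖ ≤ 1) :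
    ‖l1 * (starRingEnd ℂ) l2‖ ≤ 1 := by
  rw [norm_mul, Complex.norm_conj]
  exact mul_le_one₀ h1 (norm_nonneg _) h2

lemma pentablockBound_le_two {l1 l2 : ℂ} (h1 : ‖l1‖ ≤ 1) (h2 : ‖l2‖ ≤ 1) :
    pentablockBound l1 l2 ≤ 2 := by
  have hdiff : ‖1 - l1 * (starRingEnd ℂ) l2‖ ≤ 2 := by
    linarith [norm_sub_le (1 : ℂ) (l1 * (starRingEnd ℂ) l2), norm_one (α := ℂ),
      norm_mul_conj_le_one h1 h2]
  have hs1 : Real.sqrt (1 - ‖l1‖ ^ 2) ≤ 1 := Real.sqrt_le_one.mpr (by nlinarith [norm_nonneg l1])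
  have hs2 : Real.sqrt (1 - ‖l2‖ ^ 2) ≤ 1 := Real.sqrt_le_one.mpr (by nlinarith [norm_nonneg l2])
  unfold pentablockBound
  nlinarith [Real.sqrt_nonneg (1 - ‖l1‖ ^ 2), Real.sqrt_nonneg (1 - ‖l2‖ ^ 2)]

lemma mul_pentablockBound_lt {r : ℝ} (hr0 : 0 ≤ r) (hr1 : r < 1) {l1 l2 : ℂ}
    (h1 : ‖l1‖ ≤ 1) (h2 : ‖l2‖ ≤ 1) :
    r * pentablockBound l1 l2 < pentablockBound (r * l1) (r * l2) := by
  have hr : |r| < 1 := by rwa [abs_of_nonneg hr0]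
  have hconj :
      (r * l1) * (starRingEnd ℂ) (r * l2) = (r : ℂ) ^ 2 * (l1 * (starRingEnd ℂ) l2) := by
    rw [map_mul, Complex.conj_ofReal]
    ring
  have hdiff := mul_norm_one_sub_lt_norm_one_sub_sq_mul hr (norm_mul_conj_le_one h1 h2)
  have hsqrt := mul_le_mul (mul_sqrt_one_sub_sq_le hr0 hr1.le ‖l1‖)
    (sqrt_one_sub_sq_le_sqrt_one_sub_mul_sq hr.le ‖l2‖) (Real.sqrt_nonneg _) (Real.sqrt_nonneg _)
  unfold pentablockBound
  rw [hconj, norm_mul, norm_mul, Complex.norm_of_nonneg hr0]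
  linarith

lemma isCompact_closedPentablockParams : IsCompact closedPentablockParams := by
  have hclosed : IsClosed closedPentablockParams :=
    (isClosed_le (f := fun y : ℂ × ℂ × ℂ => ‖y.2.1‖) (by fun_prop) continuous_const).inter
      ((isClosed_le (f := fun y : ℂ × ℂ × ℂ => ‖y.2.2‖) (by fun_prop) continuous_const).inter
        (isClosed_le (f := fun y : ℂ × ℂ × ℂ => ‖y.1‖) (by fun_prop)
          (continuous_pentablockBound.comp continuous_snd)))
  have hbdd : closedPentablockParams ⊆ closedBall 0 2 := by
    rintro ⟨a, l1, l2⟩ ⟨h1, h2, ha⟩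
    have := pentablockBound_le_two h1 h2
    simp only [mem_closedBall_zero_iff, Prod.norm_def]
    exact max_le (by linarith) (max_le (by linarith) (by linarith))
  exact (isCompact_closedBall 0 2).of_isClosed_subset hclosed hbdd

lemma pentablock_subset_image_closedPentablockParams :
    pentablock ⊆ symmetrizationMap '' closedPentablockParams := by
  intro x hx
  obtain ⟨a, l1, l2, hl1, hl2, rfl, ha⟩ := mem_pentablock.mp hx
  exact ⟨(a, l1, l2), ⟨(mem_ball_zero_iff.mp hl1).le, (mem_ball_zero_iff.mp hl2).le, ha.le⟩, rfl⟩

lemma weightedDilation_image_subset_pentablock {r : ℝ} (hr0 : 0 ≤ r) (hr1 : r < 1) :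
    weightedDilation r '' (symmetrizationMap '' closedPentablockParams) ⊆ pentablock := by
  rintro _ ⟨_, ⟨⟨a, l1, l2⟩, ⟨h1, h2, ha⟩, rfl⟩, rfl⟩
  have hball : ∀ l : ℂ, ‖l‖ ≤ 1 → (r : ℂ) * l ∈ ball (0 : ℂ) 1 := fun l hl => by
    rw [mem_ball_zero_iff, norm_mul, Complex.norm_of_nonneg hr0]
    nlinarith [norm_nonneg l]
  refine mem_pentablock.mpr ⟨r * a, r * l1, r * l2, hball l1 h1, hball l2 h2, ?_, ?_⟩
  · simp only [weightedDilation, symmetrizationMap, Prod.mk.injEq]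
    exact ⟨trivial, mul_add _ _ _, by ring⟩
  · rw [norm_mul, Complex.norm_of_nonneg hr0]
    exact (mul_le_mul_of_nonneg_left ha hr0).trans_lt (mul_pentablockBound_lt hr0 hr1 h1 h2)

theorem stmt16 (r : ℝ) (hr0 : 0 < r) (hr1 : r < 1) :
    IsCompact (closure ((fun x : ℂ × ℂ × ℂ =>
        ((r : ℂ) * x.1, (r : ℂ) * x.2.1, (r : ℂ) ^ 2 * x.2.2)) '' pentablock)) ∧
    closure ((fun x : ℂ × ℂ × ℂ =>
        ((r : ℂ) * x.1, (r : ℂ) * x.2.1, (r : ℂ) ^ 2 * x.2.2)) '' pentablock)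
      ⊆ pentablock := by
  change IsCompact (closure (weightedDilation r '' pentablock)) ∧
    closure (weightedDilation r '' pentablock) ⊆ pentablock
  have hK : IsCompact (symmetrizationMap '' closedPentablockParams) :=
    isCompact_closedPentablockParams.image continuous_symmetrizationMap
  have hclosure : closure (weightedDilation r '' pentablock) ⊆
      weightedDilation r '' (symmetrizationMap '' closedPentablockParams) :=
    closure_image_subset_image_of_isCompact (continuous_weightedDilation r) hK
      pentablock_subset_image_closedPentablockParams
  exact ⟨(hK.image (continuous_weightedDilation r)).closure_of_subset
      (image_mono pentablock_subset_image_closedPentablockParams),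
    hclosure.trans (weightedDilation_image_subset_pentablock hr0.le hr1)⟩
end

section
/- The set Ω := {(a, 2λ, λ²) ∈ ℂ³ : |a| < 1 - |λ|², λ ∈ 𝔻} equals the intersection of the pentablock 𝒫 with the set {(a,s,p) : s² = 4p}; moreover the map (a,s) ↦ (a, s, s²/4) is a homeomorphism from the ellipsoid Ω̃ = {(a,s) : |a| + |s|²/4 < 1} onto Ω. -/
open Complex Metric

/-- `Ω = {(a, 2λ, λ²) : |a| < 1 - |λ|², λ ∈ 𝔻}`. -/
def royalFiber : Set (ℂ × ℂ × ℂ) :=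
  {x | ∃ a l : ℂ, l ∈ ball (0:ℂ) 1 ∧ x = (a, 2 * l, l ^ 2) ∧
    ‖a‖ < 1 - ‖l‖ ^ 2}

/-- The ellipsoid `Ω̃ = {(a,s) : |a| + |s|²/4 < 1}`. -/
def ellipsoidSet : Set (ℂ × ℂ) :=
  {z | ‖z.1‖ + (‖z.2‖) ^ 2 / 4 < 1}

lemma eq_of_add_sq_eq_four_mul {R : Type*} [CommRing R] [NoZeroDivisors R] {x y : R}
    (h : (x + y) ^ 2 = 4 * (x * y)) : x = y := by
  have hsq : (x - y) ^ 2 = 0 := by linear_combination h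
  exact sub_eq_zero.mp (pow_eq_zero_iff two_ne_zero |>.mp hsq)

lemma pentablock_bound_self {l : ℂ} (hl : ‖l‖ ≤ 1) :
    (1/2) * ‖1 - l * (starRingEnd ℂ) l‖ +
      (1/2) * Real.sqrt (1 - ‖l‖ ^ 2) * Real.sqrt (1 - ‖l‖ ^ 2) = 1 - ‖l‖ ^ 2 := by
  have hnn : (0:ℝ) ≤ 1 - ‖l‖ ^ 2 := by nlinarith [norm_nonneg l]
  have hreal : (1 : ℂ) - l * (starRingEnd ℂ) l = ((1 - ‖l‖ ^ 2 : ℝ) : ℂ) := by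
    rw [Complex.mul_conj]
    push_cast [← Complex.sq_norm]
    ring
  rw [hreal, Complex.norm_real, Real.norm_of_nonneg hnn, mul_assoc, Real.mul_self_sqrt hnn]
  ring

theorem royalFiber_eq_pentablock_inter :
    royalFiber = pentablock ∩ {x : ℂ × ℂ × ℂ | x.2.1 ^ 2 = 4 * x.2.2} := by
  ext x
  constructor
  · rintro ⟨a, l, hl, rfl, ha⟩
    have hl' : ‖l‖ ≤ 1 := (mem_ball_zero_iff.mp hl).le
    refine ⟨⟨a, l, l, hl, hl, by ring_nf, by rwa [pentablock_bound_self hl']⟩, ?_⟩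
    simp only [Set.mem_ofPred_eq]
    ring
  · rintro ⟨⟨a, l1, l2, hl1, hl2, rfl, ha⟩, hs⟩
    obtain rfl : l1 = l2 := eq_of_add_sq_eq_four_mul hs
    have hl1' : ‖l1‖ ≤ 1 := (mem_ball_zero_iff.mp hl1).le
    refine ⟨a, l1, hl1, by ext <;> simp only <;> ring, ?_⟩
    rwa [pentablock_bound_self hl1'] at ha

noncomputable def ellipsoidLift (z : ℂ × ℂ) : ℂ × ℂ × ℂ := (z.1, z.2, z.2 ^ 2 / 4)

lemma ellipsoidLift_injective : Function.Injective ellipsoidLift :=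
  Function.LeftInverse.injective (g := fun x => (x.1, x.2.1)) fun _ => rfl

lemma mk_two_mul_mem_ellipsoidSet_iff (a l : ℂ) :
    (a, 2 * l) ∈ ellipsoidSet ↔ ‖a‖ < 1 - ‖l‖ ^ 2 := by
  have hnorm : ‖2 * l‖ ^ 2 / 4 = ‖l‖ ^ 2 := by
    rw [norm_mul, Complex.norm_two]
    ring
  simp only [ellipsoidSet, Set.mem_ofPred_eq, hnorm]
  constructor <;> intro h <;> linarith

theorem royalFiber_eq_image_ellipsoidLift : royalFiber = ellipsoidLift '' ellipsoidSet := by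
  ext x
  constructor
  · rintro ⟨a, l, -, rfl, ha⟩
    refine ⟨(a, 2 * l), (mk_two_mul_mem_ellipsoidSet_iff a l).mpr ha, ?_⟩
    simp only [ellipsoidLift, Prod.mk.injEq, true_and]
    ring
  · rintro ⟨⟨a, s⟩, hz, rfl⟩
    have hs : s = 2 * (s / 2) := by ring
    rw [hs, mk_two_mul_mem_ellipsoidSet_iff] at hz
    have hl : s / 2 ∈ ball (0:ℂ) 1 := by
      rw [mem_ball_zero_iff]
      nlinarith [norm_nonneg a, norm_nonneg (s / 2)]
    refine ⟨a, s / 2, hl, ?_, hz⟩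
    simp only [ellipsoidLift, Prod.mk.injEq, true_and]
    constructor <;> ring

theorem stmt17 :
    royalFiber = pentablock ∩ {x : ℂ × ℂ × ℂ | x.2.1 ^ 2 = 4 * x.2.2} ∧
    Set.BijOn (fun z : ℂ × ℂ => (z.1, z.2, z.2 ^ 2 / 4)) ellipsoidSet royalFiber ∧
    ContinuousOn (fun z : ℂ × ℂ => ((z.1, z.2, z.2 ^ 2 / 4) : ℂ × ℂ × ℂ)) ellipsoidSet ∧
    ContinuousOn (fun x : ℂ × ℂ × ℂ => ((x.1, x.2.1) : ℂ × ℂ)) royalFiber ∧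
    (∀ x ∈ royalFiber, ((x.1, x.2.1, x.2.1 ^ 2 / 4) : ℂ × ℂ × ℂ) = x) := by
  refine ⟨royalFiber_eq_pentablock_inter, ?_, by fun_prop, by fun_prop, ?_⟩
  · rw [royalFiber_eq_image_ellipsoidLift]
    exact ellipsoidLift_injective.injOn.bijOn_image
  · rw [royalFiber_eq_image_ellipsoidLift]
    rintro _ ⟨z, -, rfl⟩
    rfl
end
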